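/- For every A ∈ 𝔰𝔭(ℝ⁶), writing S := S_A for its symmetric part, one has |S ∘₆ S|² = 4( |S|²·|S|² − 2|S²|² − ⟨JS, S⟩² ). -/
import Mathlib


open Matrix BigOperators

noncomputable section

abbrev M6 : Type := Matrix (Fin 6) (Fin 6) ℝ
abbrev M7 : Type := Matrix (Fin 7) (Fin 7) ℝ

/-- The canonical almost complex structure `J` on `ℝ⁶`:
`Je₁ = e₂, Je₂ = −e₁, Je₃ = e₄, Je₄ = −e₃, Je₅ = e₆, Je₆ = −e₅` (0-based indices). -/
def J6 : M6 := Matrix.of fun i j =>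
  if (i = 1 ∧ j = 0) ∨ (i = 3 ∧ j = 2) ∨ (i = 5 ∧ j = 4) then 1
  else if (i = 0 ∧ j = 1) ∨ (i = 2 ∧ j = 3) ∨ (i = 4 ∧ j = 5) then -1
  else 0

/-- `A ∈ 𝔰𝔭(ℝ⁶)` iff `AJ + JAᵗ = 0`. -/
def inSp (A : M6) : Prop := A * J6 + J6 * Aᵀ = 0

/-- The symmetric part `S_A = ½(A + Aᵗ)`. -/
def symPart (A : M6) : M6 := (1/2 : ℝ) • (A + Aᵀ)

/-- Frobenius inner product `⟨X,Y⟩ = tr(XYᵗ)`. -/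
def mdot {n : ℕ} (X Y : Matrix (Fin n) (Fin n) ℝ) : ℝ := (X * Yᵀ).trace

/-- Commutator `[X,Y] = XY − YX`. -/
def mcomm {n : ℕ} (X Y : Matrix (Fin n) (Fin n) ℝ) : Matrix (Fin n) (Fin n) ℝ := X * Y - Y * X

/-- Kronecker delta. -/
def kdelta {n : ℕ} (x y : Fin n) : ℝ := if x = y then 1 else 0

/-- The totally antisymmetric 3-tensor `e^a ∧ e^b ∧ e^c` evaluated on `(e_i, e_j, e_k)`. -/
def alt3 {n : ℕ} (a b c i j k : Fin n) : ℝ :=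
  Matrix.det !![kdelta a i, kdelta a j, kdelta a k;
                kdelta b i, kdelta b j, kdelta b k;
                kdelta c i, kdelta c j, kdelta c k]

/-- `ρ⁺ = e¹³⁵ − e¹⁴⁶ − e²⁴⁵ − e²³⁶` (here written with 0-based indices). -/
def rhoP (i j k : Fin 6) : ℝ :=
  alt3 0 2 4 i j k - alt3 0 3 5 i j k - alt3 1 3 4 i j k - alt3 1 2 5 i j k

/-- `(h ∘₆ k)_{ab} = Σ_{m,n,p,q} h_{mn} k_{pq} ρ⁺_{mpa} ρ⁺_{nqb}`. -/
def circ6 (h k : M6) : M6 :=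
  Matrix.of fun a b => ∑ m, ∑ n, ∑ p, ∑ q, h m n * k p q * rhoP m p a * rhoP n q b


section Aux

lemma alt3_eval {n : ℕ} (a b c i j k : Fin n) : alt3 a b c i j k =
    kdelta a i * (kdelta b j * kdelta c k - kdelta b k * kdelta c j)
  - kdelta a j * (kdelta b i * kdelta c k - kdelta b k * kdelta c i)
  + kdelta a k * (kdelta b i * kdelta c j - kdelta b j * kdelta c i) := by
  simp [alt3, Matrix.det_fin_three]; ring

lemma cons_val_five {α : Type*} {m : ℕ} (x : α) (u : Fin (m+5) → α) :
    Matrix.vecCons x u 5 = Matrix.vecHead (Matrix.vecTail (Matrix.vecTail (Matrix.vecTail (Matrix.vecTail u)))) := rfl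

@[simp] lemma rP000 : rhoP 0 0 0 = 0 := by simp (config := { decide := true }) [rhoP, alt3_eval, kdelta]
@[simp] lemma rP001 : rhoP 0 0 1 = 0 := by simp (config := { decide := true }) [rhoP, alt3_eval, kdelta]
@[simp] lemma rP002 : rhoP 0 0 2 = 0 := by simp (config := { decide := true }) [rhoP, alt3_eval, kdelta]
@[simp] lemma rP003 : rhoP 0 0 3 = 0 := by simp (config := { decide := true }) [rhoP, alt3_eval, kdelta]
@[simp] lemma rP004 : rhoP 0 0 4 = 0 := by simp (config := { decide := true }) [rhoP, alt3_eval, kdelta]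
@[simp] lemma rP005 : rhoP 0 0 5 = 0 := by simp (config := { decide := true }) [rhoP, alt3_eval, kdelta]
@[simp] lemma rP010 : rhoP 0 1 0 = 0 := by simp (config := { decide := true }) [rhoP, alt3_eval, kdelta]
@[simp] lemma rP011 : rhoP 0 1 1 = 0 := by simp (config := { decide := true }) [rhoP, alt3_eval, kdelta]
@[simp] lemma rP012 : rhoP 0 1 2 = 0 := by simp (config := { decide := true }) [rhoP, alt3_eval, kdelta]
@[simp] lemma rP013 : rhoP 0 1 3 = 0 := by simp (config := { decide := true }) [rhoP, alt3_eval, kdelta]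
@[simp] lemma rP014 : rhoP 0 1 4 = 0 := by simp (config := { decide := true }) [rhoP, alt3_eval, kdelta]
@[simp] lemma rP015 : rhoP 0 1 5 = 0 := by simp (config := { decide := true }) [rhoP, alt3_eval, kdelta]
@[simp] lemma rP020 : rhoP 0 2 0 = 0 := by simp (config := { decide := true }) [rhoP, alt3_eval, kdelta]
@[simp] lemma rP021 : rhoP 0 2 1 = 0 := by simp (config := { decide := true }) [rhoP, alt3_eval, kdelta]
@[simp] lemma rP022 : rhoP 0 2 2 = 0 := by simp (config := { decide := true }) [rhoP, alt3_eval, kdelta]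
@[simp] lemma rP023 : rhoP 0 2 3 = 0 := by simp (config := { decide := true }) [rhoP, alt3_eval, kdelta]
@[simp] lemma rP024 : rhoP 0 2 4 = 1 := by simp (config := { decide := true }) [rhoP, alt3_eval, kdelta]
@[simp] lemma rP025 : rhoP 0 2 5 = 0 := by simp (config := { decide := true }) [rhoP, alt3_eval, kdelta]
@[simp] lemma rP030 : rhoP 0 3 0 = 0 := by simp (config := { decide := true }) [rhoP, alt3_eval, kdelta]
@[simp] lemma rP031 : rhoP 0 3 1 = 0 := by simp (config := { decide := true }) [rhoP, alt3_eval, kdelta]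
@[simp] lemma rP032 : rhoP 0 3 2 = 0 := by simp (config := { decide := true }) [rhoP, alt3_eval, kdelta]
@[simp] lemma rP033 : rhoP 0 3 3 = 0 := by simp (config := { decide := true }) [rhoP, alt3_eval, kdelta]
@[simp] lemma rP034 : rhoP 0 3 4 = 0 := by simp (config := { decide := true }) [rhoP, alt3_eval, kdelta]
@[simp] lemma rP035 : rhoP 0 3 5 = -1 := by simp (config := { decide := true }) [rhoP, alt3_eval, kdelta]
@[simp] lemma rP040 : rhoP 0 4 0 = 0 := by simp (config := { decide := true }) [rhoP, alt3_eval, kdelta]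
@[simp] lemma rP041 : rhoP 0 4 1 = 0 := by simp (config := { decide := true }) [rhoP, alt3_eval, kdelta]
@[simp] lemma rP042 : rhoP 0 4 2 = -1 := by simp (config := { decide := true }) [rhoP, alt3_eval, kdelta]
@[simp] lemma rP043 : rhoP 0 4 3 = 0 := by simp (config := { decide := true }) [rhoP, alt3_eval, kdelta]
@[simp] lemma rP044 : rhoP 0 4 4 = 0 := by simp (config := { decide := true }) [rhoP, alt3_eval, kdelta]
@[simp] lemma rP045 : rhoP 0 4 5 = 0 := by simp (config := { decide := true }) [rhoP, alt3_eval, kdelta]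
@[simp] lemma rP050 : rhoP 0 5 0 = 0 := by simp (config := { decide := true }) [rhoP, alt3_eval, kdelta]
@[simp] lemma rP051 : rhoP 0 5 1 = 0 := by simp (config := { decide := true }) [rhoP, alt3_eval, kdelta]
@[simp] lemma rP052 : rhoP 0 5 2 = 0 := by simp (config := { decide := true }) [rhoP, alt3_eval, kdelta]
@[simp] lemma rP053 : rhoP 0 5 3 = 1 := by simp (config := { decide := true }) [rhoP, alt3_eval, kdelta]
@[simp] lemma rP054 : rhoP 0 5 4 = 0 := by simp (config := { decide := true }) [rhoP, alt3_eval, kdelta]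
@[simp] lemma rP055 : rhoP 0 5 5 = 0 := by simp (config := { decide := true }) [rhoP, alt3_eval, kdelta]
@[simp] lemma rP100 : rhoP 1 0 0 = 0 := by simp (config := { decide := true }) [rhoP, alt3_eval, kdelta]
@[simp] lemma rP101 : rhoP 1 0 1 = 0 := by simp (config := { decide := true }) [rhoP, alt3_eval, kdelta]
@[simp] lemma rP102 : rhoP 1 0 2 = 0 := by simp (config := { decide := true }) [rhoP, alt3_eval, kdelta]
@[simp] lemma rP103 : rhoP 1 0 3 = 0 := by simp (config := { decide := true }) [rhoP, alt3_eval, kdelta]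
@[simp] lemma rP104 : rhoP 1 0 4 = 0 := by simp (config := { decide := true }) [rhoP, alt3_eval, kdelta]
@[simp] lemma rP105 : rhoP 1 0 5 = 0 := by simp (config := { decide := true }) [rhoP, alt3_eval, kdelta]
@[simp] lemma rP110 : rhoP 1 1 0 = 0 := by simp (config := { decide := true }) [rhoP, alt3_eval, kdelta]
@[simp] lemma rP111 : rhoP 1 1 1 = 0 := by simp (config := { decide := true }) [rhoP, alt3_eval, kdelta]
@[simp] lemma rP112 : rhoP 1 1 2 = 0 := by simp (config := { decide := true }) [rhoP, alt3_eval, kdelta]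
@[simp] lemma rP113 : rhoP 1 1 3 = 0 := by simp (config := { decide := true }) [rhoP, alt3_eval, kdelta]
@[simp] lemma rP114 : rhoP 1 1 4 = 0 := by simp (config := { decide := true }) [rhoP, alt3_eval, kdelta]
@[simp] lemma rP115 : rhoP 1 1 5 = 0 := by simp (config := { decide := true }) [rhoP, alt3_eval, kdelta]
@[simp] lemma rP120 : rhoP 1 2 0 = 0 := by simp (config := { decide := true }) [rhoP, alt3_eval, kdelta]
@[simp] lemma rP121 : rhoP 1 2 1 = 0 := by simp (config := { decide := true }) [rhoP, alt3_eval, kdelta]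
@[simp] lemma rP122 : rhoP 1 2 2 = 0 := by simp (config := { decide := true }) [rhoP, alt3_eval, kdelta]
@[simp] lemma rP123 : rhoP 1 2 3 = 0 := by simp (config := { decide := true }) [rhoP, alt3_eval, kdelta]
@[simp] lemma rP124 : rhoP 1 2 4 = 0 := by simp (config := { decide := true }) [rhoP, alt3_eval, kdelta]
@[simp] lemma rP125 : rhoP 1 2 5 = -1 := by simp (config := { decide := true }) [rhoP, alt3_eval, kdelta]
@[simp] lemma rP130 : rhoP 1 3 0 = 0 := by simp (config := { decide := true }) [rhoP, alt3_eval, kdelta]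
@[simp] lemma rP131 : rhoP 1 3 1 = 0 := by simp (config := { decide := true }) [rhoP, alt3_eval, kdelta]
@[simp] lemma rP132 : rhoP 1 3 2 = 0 := by simp (config := { decide := true }) [rhoP, alt3_eval, kdelta]
@[simp] lemma rP133 : rhoP 1 3 3 = 0 := by simp (config := { decide := true }) [rhoP, alt3_eval, kdelta]
@[simp] lemma rP134 : rhoP 1 3 4 = -1 := by simp (config := { decide := true }) [rhoP, alt3_eval, kdelta]
@[simp] lemma rP135 : rhoP 1 3 5 = 0 := by simp (config := { decide := true }) [rhoP, alt3_eval, kdelta]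
@[simp] lemma rP140 : rhoP 1 4 0 = 0 := by simp (config := { decide := true }) [rhoP, alt3_eval, kdelta]
@[simp] lemma rP141 : rhoP 1 4 1 = 0 := by simp (config := { decide := true }) [rhoP, alt3_eval, kdelta]
@[simp] lemma rP142 : rhoP 1 4 2 = 0 := by simp (config := { decide := true }) [rhoP, alt3_eval, kdelta]
@[simp] lemma rP143 : rhoP 1 4 3 = 1 := by simp (config := { decide := true }) [rhoP, alt3_eval, kdelta]
@[simp] lemma rP144 : rhoP 1 4 4 = 0 := by simp (config := { decide := true }) [rhoP, alt3_eval, kdelta]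
@[simp] lemma rP145 : rhoP 1 4 5 = 0 := by simp (config := { decide := true }) [rhoP, alt3_eval, kdelta]
@[simp] lemma rP150 : rhoP 1 5 0 = 0 := by simp (config := { decide := true }) [rhoP, alt3_eval, kdelta]
@[simp] lemma rP151 : rhoP 1 5 1 = 0 := by simp (config := { decide := true }) [rhoP, alt3_eval, kdelta]
@[simp] lemma rP152 : rhoP 1 5 2 = 1 := by simp (config := { decide := true }) [rhoP, alt3_eval, kdelta]
@[simp] lemma rP153 : rhoP 1 5 3 = 0 := by simp (config := { decide := true }) [rhoP, alt3_eval, kdelta]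
@[simp] lemma rP154 : rhoP 1 5 4 = 0 := by simp (config := { decide := true }) [rhoP, alt3_eval, kdelta]
@[simp] lemma rP155 : rhoP 1 5 5 = 0 := by simp (config := { decide := true }) [rhoP, alt3_eval, kdelta]
@[simp] lemma rP200 : rhoP 2 0 0 = 0 := by simp (config := { decide := true }) [rhoP, alt3_eval, kdelta]
@[simp] lemma rP201 : rhoP 2 0 1 = 0 := by simp (config := { decide := true }) [rhoP, alt3_eval, kdelta]
@[simp] lemma rP202 : rhoP 2 0 2 = 0 := by simp (config := { decide := true }) [rhoP, alt3_eval, kdelta]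
@[simp] lemma rP203 : rhoP 2 0 3 = 0 := by simp (config := { decide := true }) [rhoP, alt3_eval, kdelta]
@[simp] lemma rP204 : rhoP 2 0 4 = -1 := by simp (config := { decide := true }) [rhoP, alt3_eval, kdelta]
@[simp] lemma rP205 : rhoP 2 0 5 = 0 := by simp (config := { decide := true }) [rhoP, alt3_eval, kdelta]
@[simp] lemma rP210 : rhoP 2 1 0 = 0 := by simp (config := { decide := true }) [rhoP, alt3_eval, kdelta]
@[simp] lemma rP211 : rhoP 2 1 1 = 0 := by simp (config := { decide := true }) [rhoP, alt3_eval, kdelta]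
@[simp] lemma rP212 : rhoP 2 1 2 = 0 := by simp (config := { decide := true }) [rhoP, alt3_eval, kdelta]
@[simp] lemma rP213 : rhoP 2 1 3 = 0 := by simp (config := { decide := true }) [rhoP, alt3_eval, kdelta]
@[simp] lemma rP214 : rhoP 2 1 4 = 0 := by simp (config := { decide := true }) [rhoP, alt3_eval, kdelta]
@[simp] lemma rP215 : rhoP 2 1 5 = 1 := by simp (config := { decide := true }) [rhoP, alt3_eval, kdelta]
@[simp] lemma rP220 : rhoP 2 2 0 = 0 := by simp (config := { decide := true }) [rhoP, alt3_eval, kdelta]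
@[simp] lemma rP221 : rhoP 2 2 1 = 0 := by simp (config := { decide := true }) [rhoP, alt3_eval, kdelta]
@[simp] lemma rP222 : rhoP 2 2 2 = 0 := by simp (config := { decide := true }) [rhoP, alt3_eval, kdelta]
@[simp] lemma rP223 : rhoP 2 2 3 = 0 := by simp (config := { decide := true }) [rhoP, alt3_eval, kdelta]
@[simp] lemma rP224 : rhoP 2 2 4 = 0 := by simp (config := { decide := true }) [rhoP, alt3_eval, kdelta]
@[simp] lemma rP225 : rhoP 2 2 5 = 0 := by simp (config := { decide := true }) [rhoP, alt3_eval, kdelta]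
@[simp] lemma rP230 : rhoP 2 3 0 = 0 := by simp (config := { decide := true }) [rhoP, alt3_eval, kdelta]
@[simp] lemma rP231 : rhoP 2 3 1 = 0 := by simp (config := { decide := true }) [rhoP, alt3_eval, kdelta]
@[simp] lemma rP232 : rhoP 2 3 2 = 0 := by simp (config := { decide := true }) [rhoP, alt3_eval, kdelta]
@[simp] lemma rP233 : rhoP 2 3 3 = 0 := by simp (config := { decide := true }) [rhoP, alt3_eval, kdelta]
@[simp] lemma rP234 : rhoP 2 3 4 = 0 := by simp (config := { decide := true }) [rhoP, alt3_eval, kdelta]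
@[simp] lemma rP235 : rhoP 2 3 5 = 0 := by simp (config := { decide := true }) [rhoP, alt3_eval, kdelta]
@[simp] lemma rP240 : rhoP 2 4 0 = 1 := by simp (config := { decide := true }) [rhoP, alt3_eval, kdelta]
@[simp] lemma rP241 : rhoP 2 4 1 = 0 := by simp (config := { decide := true }) [rhoP, alt3_eval, kdelta]
@[simp] lemma rP242 : rhoP 2 4 2 = 0 := by simp (config := { decide := true }) [rhoP, alt3_eval, kdelta]
@[simp] lemma rP243 : rhoP 2 4 3 = 0 := by simp (config := { decide := true }) [rhoP, alt3_eval, kdelta]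
@[simp] lemma rP244 : rhoP 2 4 4 = 0 := by simp (config := { decide := true }) [rhoP, alt3_eval, kdelta]
@[simp] lemma rP245 : rhoP 2 4 5 = 0 := by simp (config := { decide := true }) [rhoP, alt3_eval, kdelta]
@[simp] lemma rP250 : rhoP 2 5 0 = 0 := by simp (config := { decide := true }) [rhoP, alt3_eval, kdelta]
@[simp] lemma rP251 : rhoP 2 5 1 = -1 := by simp (config := { decide := true }) [rhoP, alt3_eval, kdelta]
@[simp] lemma rP252 : rhoP 2 5 2 = 0 := by simp (config := { decide := true }) [rhoP, alt3_eval, kdelta]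
@[simp] lemma rP253 : rhoP 2 5 3 = 0 := by simp (config := { decide := true }) [rhoP, alt3_eval, kdelta]
@[simp] lemma rP254 : rhoP 2 5 4 = 0 := by simp (config := { decide := true }) [rhoP, alt3_eval, kdelta]
@[simp] lemma rP255 : rhoP 2 5 5 = 0 := by simp (config := { decide := true }) [rhoP, alt3_eval, kdelta]
@[simp] lemma rP300 : rhoP 3 0 0 = 0 := by simp (config := { decide := true }) [rhoP, alt3_eval, kdelta]
@[simp] lemma rP301 : rhoP 3 0 1 = 0 := by simp (config := { decide := true }) [rhoP, alt3_eval, kdelta]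
@[simp] lemma rP302 : rhoP 3 0 2 = 0 := by simp (config := { decide := true }) [rhoP, alt3_eval, kdelta]
@[simp] lemma rP303 : rhoP 3 0 3 = 0 := by simp (config := { decide := true }) [rhoP, alt3_eval, kdelta]
@[simp] lemma rP304 : rhoP 3 0 4 = 0 := by simp (config := { decide := true }) [rhoP, alt3_eval, kdelta]
@[simp] lemma rP305 : rhoP 3 0 5 = 1 := by simp (config := { decide := true }) [rhoP, alt3_eval, kdelta]
@[simp] lemma rP310 : rhoP 3 1 0 = 0 := by simp (config := { decide := true }) [rhoP, alt3_eval, kdelta]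
@[simp] lemma rP311 : rhoP 3 1 1 = 0 := by simp (config := { decide := true }) [rhoP, alt3_eval, kdelta]
@[simp] lemma rP312 : rhoP 3 1 2 = 0 := by simp (config := { decide := true }) [rhoP, alt3_eval, kdelta]
@[simp] lemma rP313 : rhoP 3 1 3 = 0 := by simp (config := { decide := true }) [rhoP, alt3_eval, kdelta]
@[simp] lemma rP314 : rhoP 3 1 4 = 1 := by simp (config := { decide := true }) [rhoP, alt3_eval, kdelta]
@[simp] lemma rP315 : rhoP 3 1 5 = 0 := by simp (config := { decide := true }) [rhoP, alt3_eval, kdelta]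
@[simp] lemma rP320 : rhoP 3 2 0 = 0 := by simp (config := { decide := true }) [rhoP, alt3_eval, kdelta]
@[simp] lemma rP321 : rhoP 3 2 1 = 0 := by simp (config := { decide := true }) [rhoP, alt3_eval, kdelta]
@[simp] lemma rP322 : rhoP 3 2 2 = 0 := by simp (config := { decide := true }) [rhoP, alt3_eval, kdelta]
@[simp] lemma rP323 : rhoP 3 2 3 = 0 := by simp (config := { decide := true }) [rhoP, alt3_eval, kdelta]
@[simp] lemma rP324 : rhoP 3 2 4 = 0 := by simp (config := { decide := true }) [rhoP, alt3_eval, kdelta]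
@[simp] lemma rP325 : rhoP 3 2 5 = 0 := by simp (config := { decide := true }) [rhoP, alt3_eval, kdelta]
@[simp] lemma rP330 : rhoP 3 3 0 = 0 := by simp (config := { decide := true }) [rhoP, alt3_eval, kdelta]
@[simp] lemma rP331 : rhoP 3 3 1 = 0 := by simp (config := { decide := true }) [rhoP, alt3_eval, kdelta]
@[simp] lemma rP332 : rhoP 3 3 2 = 0 := by simp (config := { decide := true }) [rhoP, alt3_eval, kdelta]
@[simp] lemma rP333 : rhoP 3 3 3 = 0 := by simp (config := { decide := true }) [rhoP, alt3_eval, kdelta]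
@[simp] lemma rP334 : rhoP 3 3 4 = 0 := by simp (config := { decide := true }) [rhoP, alt3_eval, kdelta]
@[simp] lemma rP335 : rhoP 3 3 5 = 0 := by simp (config := { decide := true }) [rhoP, alt3_eval, kdelta]
@[simp] lemma rP340 : rhoP 3 4 0 = 0 := by simp (config := { decide := true }) [rhoP, alt3_eval, kdelta]
@[simp] lemma rP341 : rhoP 3 4 1 = -1 := by simp (config := { decide := true }) [rhoP, alt3_eval, kdelta]
@[simp] lemma rP342 : rhoP 3 4 2 = 0 := by simp (config := { decide := true }) [rhoP, alt3_eval, kdelta]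
@[simp] lemma rP343 : rhoP 3 4 3 = 0 := by simp (config := { decide := true }) [rhoP, alt3_eval, kdelta]
@[simp] lemma rP344 : rhoP 3 4 4 = 0 := by simp (config := { decide := true }) [rhoP, alt3_eval, kdelta]
@[simp] lemma rP345 : rhoP 3 4 5 = 0 := by simp (config := { decide := true }) [rhoP, alt3_eval, kdelta]
@[simp] lemma rP350 : rhoP 3 5 0 = -1 := by simp (config := { decide := true }) [rhoP, alt3_eval, kdelta]
@[simp] lemma rP351 : rhoP 3 5 1 = 0 := by simp (config := { decide := true }) [rhoP, alt3_eval, kdelta]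
@[simp] lemma rP352 : rhoP 3 5 2 = 0 := by simp (config := { decide := true }) [rhoP, alt3_eval, kdelta]
@[simp] lemma rP353 : rhoP 3 5 3 = 0 := by simp (config := { decide := true }) [rhoP, alt3_eval, kdelta]
@[simp] lemma rP354 : rhoP 3 5 4 = 0 := by simp (config := { decide := true }) [rhoP, alt3_eval, kdelta]
@[simp] lemma rP355 : rhoP 3 5 5 = 0 := by simp (config := { decide := true }) [rhoP, alt3_eval, kdelta]
@[simp] lemma rP400 : rhoP 4 0 0 = 0 := by simp (config := { decide := true }) [rhoP, alt3_eval, kdelta]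
@[simp] lemma rP401 : rhoP 4 0 1 = 0 := by simp (config := { decide := true }) [rhoP, alt3_eval, kdelta]
@[simp] lemma rP402 : rhoP 4 0 2 = 1 := by simp (config := { decide := true }) [rhoP, alt3_eval, kdelta]
@[simp] lemma rP403 : rhoP 4 0 3 = 0 := by simp (config := { decide := true }) [rhoP, alt3_eval, kdelta]
@[simp] lemma rP404 : rhoP 4 0 4 = 0 := by simp (config := { decide := true }) [rhoP, alt3_eval, kdelta]
@[simp] lemma rP405 : rhoP 4 0 5 = 0 := by simp (config := { decide := true }) [rhoP, alt3_eval, kdelta]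
@[simp] lemma rP410 : rhoP 4 1 0 = 0 := by simp (config := { decide := true }) [rhoP, alt3_eval, kdelta]
@[simp] lemma rP411 : rhoP 4 1 1 = 0 := by simp (config := { decide := true }) [rhoP, alt3_eval, kdelta]
@[simp] lemma rP412 : rhoP 4 1 2 = 0 := by simp (config := { decide := true }) [rhoP, alt3_eval, kdelta]
@[simp] lemma rP413 : rhoP 4 1 3 = -1 := by simp (config := { decide := true }) [rhoP, alt3_eval, kdelta]
@[simp] lemma rP414 : rhoP 4 1 4 = 0 := by simp (config := { decide := true }) [rhoP, alt3_eval, kdelta]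
@[simp] lemma rP415 : rhoP 4 1 5 = 0 := by simp (config := { decide := true }) [rhoP, alt3_eval, kdelta]
@[simp] lemma rP420 : rhoP 4 2 0 = -1 := by simp (config := { decide := true }) [rhoP, alt3_eval, kdelta]
@[simp] lemma rP421 : rhoP 4 2 1 = 0 := by simp (config := { decide := true }) [rhoP, alt3_eval, kdelta]
@[simp] lemma rP422 : rhoP 4 2 2 = 0 := by simp (config := { decide := true }) [rhoP, alt3_eval, kdelta]
@[simp] lemma rP423 : rhoP 4 2 3 = 0 := by simp (config := { decide := true }) [rhoP, alt3_eval, kdelta]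
@[simp] lemma rP424 : rhoP 4 2 4 = 0 := by simp (config := { decide := true }) [rhoP, alt3_eval, kdelta]
@[simp] lemma rP425 : rhoP 4 2 5 = 0 := by simp (config := { decide := true }) [rhoP, alt3_eval, kdelta]
@[simp] lemma rP430 : rhoP 4 3 0 = 0 := by simp (config := { decide := true }) [rhoP, alt3_eval, kdelta]
@[simp] lemma rP431 : rhoP 4 3 1 = 1 := by simp (config := { decide := true }) [rhoP, alt3_eval, kdelta]
@[simp] lemma rP432 : rhoP 4 3 2 = 0 := by simp (config := { decide := true }) [rhoP, alt3_eval, kdelta]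
@[simp] lemma rP433 : rhoP 4 3 3 = 0 := by simp (config := { decide := true }) [rhoP, alt3_eval, kdelta]
@[simp] lemma rP434 : rhoP 4 3 4 = 0 := by simp (config := { decide := true }) [rhoP, alt3_eval, kdelta]
@[simp] lemma rP435 : rhoP 4 3 5 = 0 := by simp (config := { decide := true }) [rhoP, alt3_eval, kdelta]
@[simp] lemma rP440 : rhoP 4 4 0 = 0 := by simp (config := { decide := true }) [rhoP, alt3_eval, kdelta]
@[simp] lemma rP441 : rhoP 4 4 1 = 0 := by simp (config := { decide := true }) [rhoP, alt3_eval, kdelta]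
@[simp] lemma rP442 : rhoP 4 4 2 = 0 := by simp (config := { decide := true }) [rhoP, alt3_eval, kdelta]
@[simp] lemma rP443 : rhoP 4 4 3 = 0 := by simp (config := { decide := true }) [rhoP, alt3_eval, kdelta]
@[simp] lemma rP444 : rhoP 4 4 4 = 0 := by simp (config := { decide := true }) [rhoP, alt3_eval, kdelta]
@[simp] lemma rP445 : rhoP 4 4 5 = 0 := by simp (config := { decide := true }) [rhoP, alt3_eval, kdelta]
@[simp] lemma rP450 : rhoP 4 5 0 = 0 := by simp (config := { decide := true }) [rhoP, alt3_eval, kdelta]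
@[simp] lemma rP451 : rhoP 4 5 1 = 0 := by simp (config := { decide := true }) [rhoP, alt3_eval, kdelta]
@[simp] lemma rP452 : rhoP 4 5 2 = 0 := by simp (config := { decide := true }) [rhoP, alt3_eval, kdelta]
@[simp] lemma rP453 : rhoP 4 5 3 = 0 := by simp (config := { decide := true }) [rhoP, alt3_eval, kdelta]
@[simp] lemma rP454 : rhoP 4 5 4 = 0 := by simp (config := { decide := true }) [rhoP, alt3_eval, kdelta]
@[simp] lemma rP455 : rhoP 4 5 5 = 0 := by simp (config := { decide := true }) [rhoP, alt3_eval, kdelta]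
@[simp] lemma rP500 : rhoP 5 0 0 = 0 := by simp (config := { decide := true }) [rhoP, alt3_eval, kdelta]
@[simp] lemma rP501 : rhoP 5 0 1 = 0 := by simp (config := { decide := true }) [rhoP, alt3_eval, kdelta]
@[simp] lemma rP502 : rhoP 5 0 2 = 0 := by simp (config := { decide := true }) [rhoP, alt3_eval, kdelta]
@[simp] lemma rP503 : rhoP 5 0 3 = -1 := by simp (config := { decide := true }) [rhoP, alt3_eval, kdelta]
@[simp] lemma rP504 : rhoP 5 0 4 = 0 := by simp (config := { decide := true }) [rhoP, alt3_eval, kdelta]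
@[simp] lemma rP505 : rhoP 5 0 5 = 0 := by simp (config := { decide := true }) [rhoP, alt3_eval, kdelta]
@[simp] lemma rP510 : rhoP 5 1 0 = 0 := by simp (config := { decide := true }) [rhoP, alt3_eval, kdelta]
@[simp] lemma rP511 : rhoP 5 1 1 = 0 := by simp (config := { decide := true }) [rhoP, alt3_eval, kdelta]
@[simp] lemma rP512 : rhoP 5 1 2 = -1 := by simp (config := { decide := true }) [rhoP, alt3_eval, kdelta]
@[simp] lemma rP513 : rhoP 5 1 3 = 0 := by simp (config := { decide := true }) [rhoP, alt3_eval, kdelta]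
@[simp] lemma rP514 : rhoP 5 1 4 = 0 := by simp (config := { decide := true }) [rhoP, alt3_eval, kdelta]
@[simp] lemma rP515 : rhoP 5 1 5 = 0 := by simp (config := { decide := true }) [rhoP, alt3_eval, kdelta]
@[simp] lemma rP520 : rhoP 5 2 0 = 0 := by simp (config := { decide := true }) [rhoP, alt3_eval, kdelta]
@[simp] lemma rP521 : rhoP 5 2 1 = 1 := by simp (config := { decide := true }) [rhoP, alt3_eval, kdelta]
@[simp] lemma rP522 : rhoP 5 2 2 = 0 := by simp (config := { decide := true }) [rhoP, alt3_eval, kdelta]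
@[simp] lemma rP523 : rhoP 5 2 3 = 0 := by simp (config := { decide := true }) [rhoP, alt3_eval, kdelta]
@[simp] lemma rP524 : rhoP 5 2 4 = 0 := by simp (config := { decide := true }) [rhoP, alt3_eval, kdelta]
@[simp] lemma rP525 : rhoP 5 2 5 = 0 := by simp (config := { decide := true }) [rhoP, alt3_eval, kdelta]
@[simp] lemma rP530 : rhoP 5 3 0 = 1 := by simp (config := { decide := true }) [rhoP, alt3_eval, kdelta]
@[simp] lemma rP531 : rhoP 5 3 1 = 0 := by simp (config := { decide := true }) [rhoP, alt3_eval, kdelta]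
@[simp] lemma rP532 : rhoP 5 3 2 = 0 := by simp (config := { decide := true }) [rhoP, alt3_eval, kdelta]
@[simp] lemma rP533 : rhoP 5 3 3 = 0 := by simp (config := { decide := true }) [rhoP, alt3_eval, kdelta]
@[simp] lemma rP534 : rhoP 5 3 4 = 0 := by simp (config := { decide := true }) [rhoP, alt3_eval, kdelta]
@[simp] lemma rP535 : rhoP 5 3 5 = 0 := by simp (config := { decide := true }) [rhoP, alt3_eval, kdelta]
@[simp] lemma rP540 : rhoP 5 4 0 = 0 := by simp (config := { decide := true }) [rhoP, alt3_eval, kdelta]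
@[simp] lemma rP541 : rhoP 5 4 1 = 0 := by simp (config := { decide := true }) [rhoP, alt3_eval, kdelta]
@[simp] lemma rP542 : rhoP 5 4 2 = 0 := by simp (config := { decide := true }) [rhoP, alt3_eval, kdelta]
@[simp] lemma rP543 : rhoP 5 4 3 = 0 := by simp (config := { decide := true }) [rhoP, alt3_eval, kdelta]
@[simp] lemma rP544 : rhoP 5 4 4 = 0 := by simp (config := { decide := true }) [rhoP, alt3_eval, kdelta]
@[simp] lemma rP545 : rhoP 5 4 5 = 0 := by simp (config := { decide := true }) [rhoP, alt3_eval, kdelta]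
@[simp] lemma rP550 : rhoP 5 5 0 = 0 := by simp (config := { decide := true }) [rhoP, alt3_eval, kdelta]
@[simp] lemma rP551 : rhoP 5 5 1 = 0 := by simp (config := { decide := true }) [rhoP, alt3_eval, kdelta]
@[simp] lemma rP552 : rhoP 5 5 2 = 0 := by simp (config := { decide := true }) [rhoP, alt3_eval, kdelta]
@[simp] lemma rP553 : rhoP 5 5 3 = 0 := by simp (config := { decide := true }) [rhoP, alt3_eval, kdelta]
@[simp] lemma rP554 : rhoP 5 5 4 = 0 := by simp (config := { decide := true }) [rhoP, alt3_eval, kdelta]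
@[simp] lemma rP555 : rhoP 5 5 5 = 0 := by simp (config := { decide := true }) [rhoP, alt3_eval, kdelta]

/-- Parametrized form of a symmetric matrix anticommuting with `J6`. -/
def Pmat (a1 b1 a2 b2 a3 b3 x1 y1 x2 y2 x3 y3 : ℝ) : M6 :=
  !![a1, b1, x1, y1, x2, y2;
     b1, (-a1), y1, (-x1), y2, (-x2);
     x1, y1, a2, b2, x3, y3;
     y1, (-x1), b2, (-a2), y3, (-x3);
     x2, y2, x3, y3, a3, b3;
     y2, (-x2), y3, (-x3), b3, (-a3)]


def Qmat (a1 b1 a2 b2 a3 b3 x1 y1 x2 y2 x3 y3 : ℝ) : M6 :=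
  !![4*a2*a3 - 4*b2*b3 - 4*x3*x3 + 4*y3*y3, (-4)*a2*b3 - 4*a3*b2 + 8*x3*y3, (-4)*a3*x1 + 4*b3*y1 + 4*x2*x3 - 4*y2*y3, 4*a3*y1 + 4*b3*x1 - 4*x2*y3 - 4*x3*y2, (-4)*a2*x2 + 4*b2*y2 + 4*x1*x3 - 4*y1*y3, 4*a2*y2 + 4*b2*x2 - 4*x1*y3 - 4*x3*y1;
     (-4)*a2*b3 - 4*a3*b2 + 8*x3*y3, (-4)*a2*a3 + 4*b2*b3 + 4*x3*x3 - 4*y3*y3, 4*a3*y1 + 4*b3*x1 - 4*x2*y3 - 4*x3*y2, 4*a3*x1 - 4*b3*y1 - 4*x2*x3 + 4*y2*y3, 4*a2*y2 + 4*b2*x2 - 4*x1*y3 - 4*x3*y1, 4*a2*x2 - 4*b2*y2 - 4*x1*x3 + 4*y1*y3;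
     (-4)*a3*x1 + 4*b3*y1 + 4*x2*x3 - 4*y2*y3, 4*a3*y1 + 4*b3*x1 - 4*x2*y3 - 4*x3*y2, 4*a1*a3 - 4*b1*b3 - 4*x2*x2 + 4*y2*y2, (-4)*a1*b3 - 4*a3*b1 + 8*x2*y2, (-4)*a1*x3 + 4*b1*y3 + 4*x1*x2 - 4*y1*y2, 4*a1*y3 + 4*b1*x3 - 4*x1*y2 - 4*x2*y1;
     4*a3*y1 + 4*b3*x1 - 4*x2*y3 - 4*x3*y2, 4*a3*x1 - 4*b3*y1 - 4*x2*x3 + 4*y2*y3, (-4)*a1*b3 - 4*a3*b1 + 8*x2*y2, (-4)*a1*a3 + 4*b1*b3 + 4*x2*x2 - 4*y2*y2, 4*a1*y3 + 4*b1*x3 - 4*x1*y2 - 4*x2*y1, 4*a1*x3 - 4*b1*y3 - 4*x1*x2 + 4*y1*y2;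
     (-4)*a2*x2 + 4*b2*y2 + 4*x1*x3 - 4*y1*y3, 4*a2*y2 + 4*b2*x2 - 4*x1*y3 - 4*x3*y1, (-4)*a1*x3 + 4*b1*y3 + 4*x1*x2 - 4*y1*y2, 4*a1*y3 + 4*b1*x3 - 4*x1*y2 - 4*x2*y1, 4*a1*a2 - 4*b1*b2 - 4*x1*x1 + 4*y1*y1, (-4)*a1*b2 - 4*a2*b1 + 8*x1*y1;
     4*a2*y2 + 4*b2*x2 - 4*x1*y3 - 4*x3*y1, 4*a2*x2 - 4*b2*y2 - 4*x1*x3 + 4*y1*y3, 4*a1*y3 + 4*b1*x3 - 4*x1*y2 - 4*x2*y1, 4*a1*x3 - 4*b1*y3 - 4*x1*x2 + 4*y1*y2, (-4)*a1*b2 - 4*a2*b1 + 8*x1*y1, (-4)*a1*a2 + 4*b1*b2 + 4*x1*x1 - 4*y1*y1]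

def PPmat (a1 b1 a2 b2 a3 b3 x1 y1 x2 y2 x3 y3 : ℝ) : M6 :=
  !![1*a1*a1 + 1*b1*b1 + 1*x1*x1 + 1*x2*x2 + 1*y1*y1 + 1*y2*y2, (0:ℝ), 1*a1*x1 + 1*a2*x1 + 1*b1*y1 + 1*b2*y1 + 1*x2*x3 + 1*y2*y3, 1*a1*y1 - 1*a2*y1 - 1*b1*x1 + 1*b2*x1 + 1*x2*y3 - 1*x3*y2, 1*a1*x2 + 1*a3*x2 + 1*b1*y2 + 1*b3*y2 + 1*x1*x3 + 1*y1*y3, 1*a1*y2 - 1*a3*y2 - 1*b1*x2 + 1*b3*x2 + 1*x1*y3 - 1*x3*y1;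
     (0:ℝ), 1*a1*a1 + 1*b1*b1 + 1*x1*x1 + 1*x2*x2 + 1*y1*y1 + 1*y2*y2, (-1)*a1*y1 + 1*a2*y1 + 1*b1*x1 - 1*b2*x1 - 1*x2*y3 + 1*x3*y2, 1*a1*x1 + 1*a2*x1 + 1*b1*y1 + 1*b2*y1 + 1*x2*x3 + 1*y2*y3, (-1)*a1*y2 + 1*a3*y2 + 1*b1*x2 - 1*b3*x2 - 1*x1*y3 + 1*x3*y1, 1*a1*x2 + 1*a3*x2 + 1*b1*y2 + 1*b3*y2 + 1*x1*x3 + 1*y1*y3;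
     1*a1*x1 + 1*a2*x1 + 1*b1*y1 + 1*b2*y1 + 1*x2*x3 + 1*y2*y3, (-1)*a1*y1 + 1*a2*y1 + 1*b1*x1 - 1*b2*x1 - 1*x2*y3 + 1*x3*y2, 1*a2*a2 + 1*b2*b2 + 1*x1*x1 + 1*x3*x3 + 1*y1*y1 + 1*y3*y3, (0:ℝ), 1*a2*x3 + 1*a3*x3 + 1*b2*y3 + 1*b3*y3 + 1*x1*x2 + 1*y1*y2, 1*a2*y3 - 1*a3*y3 - 1*b2*x3 + 1*b3*x3 + 1*x1*y2 - 1*x2*y1;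
     1*a1*y1 - 1*a2*y1 - 1*b1*x1 + 1*b2*x1 + 1*x2*y3 - 1*x3*y2, 1*a1*x1 + 1*a2*x1 + 1*b1*y1 + 1*b2*y1 + 1*x2*x3 + 1*y2*y3, (0:ℝ), 1*a2*a2 + 1*b2*b2 + 1*x1*x1 + 1*x3*x3 + 1*y1*y1 + 1*y3*y3, (-1)*a2*y3 + 1*a3*y3 + 1*b2*x3 - 1*b3*x3 - 1*x1*y2 + 1*x2*y1, 1*a2*x3 + 1*a3*x3 + 1*b2*y3 + 1*b3*y3 + 1*x1*x2 + 1*y1*y2;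
     1*a1*x2 + 1*a3*x2 + 1*b1*y2 + 1*b3*y2 + 1*x1*x3 + 1*y1*y3, (-1)*a1*y2 + 1*a3*y2 + 1*b1*x2 - 1*b3*x2 - 1*x1*y3 + 1*x3*y1, 1*a2*x3 + 1*a3*x3 + 1*b2*y3 + 1*b3*y3 + 1*x1*x2 + 1*y1*y2, (-1)*a2*y3 + 1*a3*y3 + 1*b2*x3 - 1*b3*x3 - 1*x1*y2 + 1*x2*y1, 1*a3*a3 + 1*b3*b3 + 1*x2*x2 + 1*x3*x3 + 1*y2*y2 + 1*y3*y3, (0:ℝ);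
     1*a1*y2 - 1*a3*y2 - 1*b1*x2 + 1*b3*x2 + 1*x1*y3 - 1*x3*y1, 1*a1*x2 + 1*a3*x2 + 1*b1*y2 + 1*b3*y2 + 1*x1*x3 + 1*y1*y3, 1*a2*y3 - 1*a3*y3 - 1*b2*x3 + 1*b3*x3 + 1*x1*y2 - 1*x2*y1, 1*a2*x3 + 1*a3*x3 + 1*b2*y3 + 1*b3*y3 + 1*x1*x2 + 1*y1*y2, (0:ℝ), 1*a3*a3 + 1*b3*b3 + 1*x2*x2 + 1*x3*x3 + 1*y2*y2 + 1*y3*y3]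

def JPmat (a1 b1 a2 b2 a3 b3 x1 y1 x2 y2 x3 y3 : ℝ) : M6 :=
  !![(-1)*b1, 1*a1, (-1)*y1, 1*x1, (-1)*y2, 1*x2;
     1*a1, 1*b1, 1*x1, 1*y1, 1*x2, 1*y2;
     (-1)*y1, 1*x1, (-1)*b2, 1*a2, (-1)*y3, 1*x3;
     1*x1, 1*y1, 1*a2, 1*b2, 1*x3, 1*y3;
     (-1)*y2, 1*x2, (-1)*y3, 1*x3, (-1)*b3, 1*a3;
     1*x2, 1*y2, 1*x3, 1*y3, 1*a3, 1*b3]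

lemma mdot_eq {n : ℕ} (X Y : Matrix (Fin n) (Fin n) ℝ) :
    mdot X Y = ∑ i, ∑ j, X i j * Y i j := by
  simp [mdot, Matrix.trace, Matrix.diag, Matrix.mul_apply, Matrix.transpose_apply]

set_option maxHeartbeats 0 in
lemma circP (a1 b1 a2 b2 a3 b3 x1 y1 x2 y2 x3 y3 : ℝ) :
    circ6 (Pmat a1 b1 a2 b2 a3 b3 x1 y1 x2 y2 x3 y3) (Pmat a1 b1 a2 b2 a3 b3 x1 y1 x2 y2 x3 y3) = Qmat a1 b1 a2 b2 a3 b3 x1 y1 x2 y2 x3 y3 := by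
  ext a b
  fin_cases a <;> fin_cases b <;>
    (simp only [circ6, Matrix.of_apply, Fin.sum_univ_six]
     simp [Pmat, Qmat, cons_val_five]
     ring)

set_option maxHeartbeats 0 in
lemma PPeq (a1 b1 a2 b2 a3 b3 x1 y1 x2 y2 x3 y3 : ℝ) :
    Pmat a1 b1 a2 b2 a3 b3 x1 y1 x2 y2 x3 y3 * Pmat a1 b1 a2 b2 a3 b3 x1 y1 x2 y2 x3 y3 = PPmat a1 b1 a2 b2 a3 b3 x1 y1 x2 y2 x3 y3 := by
  ext a b
  fin_cases a <;> fin_cases b <;>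
    (simp [Matrix.mul_apply, Fin.sum_univ_six, Pmat, PPmat, cons_val_five]; ring)

set_option maxHeartbeats 0 in
lemma JPeq (a1 b1 a2 b2 a3 b3 x1 y1 x2 y2 x3 y3 : ℝ) :
    J6 * Pmat a1 b1 a2 b2 a3 b3 x1 y1 x2 y2 x3 y3 = JPmat a1 b1 a2 b2 a3 b3 x1 y1 x2 y2 x3 y3 := by
  ext a b
  fin_cases a <;> fin_cases b <;>
    (simp (config := { decide := true }) [Matrix.mul_apply, Fin.sum_univ_six, J6, Pmat,
       JPmat, cons_val_five]
     try ring)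

set_option maxHeartbeats 0 in
lemma keyId (a1 b1 a2 b2 a3 b3 x1 y1 x2 y2 x3 y3 : ℝ) :
    mdot (circ6 (Pmat a1 b1 a2 b2 a3 b3 x1 y1 x2 y2 x3 y3) (Pmat a1 b1 a2 b2 a3 b3 x1 y1 x2 y2 x3 y3)) (circ6 (Pmat a1 b1 a2 b2 a3 b3 x1 y1 x2 y2 x3 y3) (Pmat a1 b1 a2 b2 a3 b3 x1 y1 x2 y2 x3 y3)) =
      4 * (mdot (Pmat a1 b1 a2 b2 a3 b3 x1 y1 x2 y2 x3 y3) (Pmat a1 b1 a2 b2 a3 b3 x1 y1 x2 y2 x3 y3) * mdot (Pmat a1 b1 a2 b2 a3 b3 x1 y1 x2 y2 x3 y3) (Pmat a1 b1 a2 b2 a3 b3 x1 y1 x2 y2 x3 y3)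
        - 2 * mdot (Pmat a1 b1 a2 b2 a3 b3 x1 y1 x2 y2 x3 y3 * Pmat a1 b1 a2 b2 a3 b3 x1 y1 x2 y2 x3 y3) (Pmat a1 b1 a2 b2 a3 b3 x1 y1 x2 y2 x3 y3 * Pmat a1 b1 a2 b2 a3 b3 x1 y1 x2 y2 x3 y3)
        - (mdot (J6 * Pmat a1 b1 a2 b2 a3 b3 x1 y1 x2 y2 x3 y3) (Pmat a1 b1 a2 b2 a3 b3 x1 y1 x2 y2 x3 y3))^2) := by
  rw [circP, PPeq, JPeq]
  simp only [mdot_eq, Fin.sum_univ_six]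
  simp [Pmat, Qmat, PPmat, JPmat, cons_val_five]
  ring

set_option maxHeartbeats 2000000 in
lemma symPart_eq (A : M6) (hA : inSp A) :
    symPart A = Pmat (symPart A 0 0) (symPart A 0 1) (symPart A 2 2) (symPart A 2 3)
      (symPart A 4 4) (symPart A 4 5) (symPart A 0 2) (symPart A 0 3) (symPart A 0 4)
      (symPart A 0 5) (symPart A 2 4) (symPart A 2 5) := by
  set S := symPart A with hS
  have hsym : ∀ i j, S j i = S i j := by
    intro i j
    simp [hS, symPart, Matrix.add_apply, Matrix.transpose_apply, add_comm]
  have hJJ : J6 * J6 = -1 := by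
    ext i j
    fin_cases i <;> fin_cases j <;>
      simp (config := { decide := true }) [J6, Matrix.mul_apply, Fin.sum_univ_six,
        Matrix.one_apply]
  have hAT : Aᵀ = J6 * A * J6 := by
    have h1 : J6 * Aᵀ = -(A * J6) := by
      have := hA
      rw [inSp] at this
      linear_combination (norm := abel) this
    calc Aᵀ = -(-1 : M6) * Aᵀ := by simp
    _ = -(J6 * J6) * Aᵀ := by rw [hJJ]
    _ = -(J6 * (J6 * Aᵀ)) := by noncomm_ring
    _ = J6 * (A * J6) := by rw [h1]; noncomm_ring
    _ = J6 * A * J6 := by noncomm_ring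
  have hAC : S * J6 + J6 * S = 0 := by
    rw [hS, symPart, hAT]
    rw [smul_mul_assoc, mul_smul_comm, ← smul_add]
    have expand : (A + J6 * A * J6) * J6 + J6 * (A + J6 * A * J6)
        = A * J6 + J6 * A * (J6 * J6) + (J6 * A + (J6 * J6) * (A * J6)) := by
      noncomm_ring
    rw [expand, hJJ]
    simp
    try abel
  have hRel : ∀ i j, (S * J6) i j + (J6 * S) i j = 0 := by
    intro i j
    have := congrFun (congrFun hAC i) j
    simpa [Matrix.add_apply] using this
  have e00 : S 1 1 = -S 0 0 := by
    have h := hRel 0 1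
    simp (config := { decide := true }) [Matrix.mul_apply, J6, Fin.sum_univ_six] at h
    linarith
  have e02 : S 1 3 = -S 0 2 := by
    have h := hRel 0 3
    simp (config := { decide := true }) [Matrix.mul_apply, J6, Fin.sum_univ_six] at h
    linarith
  have e04 : S 1 5 = -S 0 4 := by
    have h := hRel 0 5
    simp (config := { decide := true }) [Matrix.mul_apply, J6, Fin.sum_univ_six] at h
    linarith
  have e03 : S 1 2 = S 0 3 := by
    have h := hRel 0 2
    simp (config := { decide := true }) [Matrix.mul_apply, J6, Fin.sum_univ_six] at h
    linarith
  have e05 : S 1 4 = S 0 5 := by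
    have h := hRel 0 4
    simp (config := { decide := true }) [Matrix.mul_apply, J6, Fin.sum_univ_six] at h
    linarith
  have e22 : S 3 3 = -S 2 2 := by
    have h := hRel 2 3
    simp (config := { decide := true }) [Matrix.mul_apply, J6, Fin.sum_univ_six] at h
    linarith
  have e24 : S 3 5 = -S 2 4 := by
    have h := hRel 2 5
    simp (config := { decide := true }) [Matrix.mul_apply, J6, Fin.sum_univ_six] at h
    linarith
  have e25 : S 3 4 = S 2 5 := by
    have h := hRel 2 4
    simp (config := { decide := true }) [Matrix.mul_apply, J6, Fin.sum_univ_six] at h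
    linarith
  have e44 : S 5 5 = -S 4 4 := by
    have h := hRel 4 5
    simp (config := { decide := true }) [Matrix.mul_apply, J6, Fin.sum_univ_six] at h
    linarith
  ext i j
  fin_cases i <;> fin_cases j <;>
    simp [Pmat, cons_val_five] <;>
    linarith [hsym 0 1, hsym 0 2, hsym 0 3, hsym 0 4, hsym 0 5, hsym 1 2, hsym 1 3,
         hsym 1 4, hsym 1 5, hsym 2 3, hsym 2 4, hsym 2 5, hsym 3 4, hsym 3 5, hsym 4 5,
         e00, e02, e04, e03, e05, e22, e24, e25, e44]

end Aux

/-- For `A ∈ 𝔰𝔭(ℝ⁶)` with symmetric part `S = S_A`: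
`|S ∘₆ S|² = 4(|S|²|S|² − 2|S²|² − ⟨JS,S⟩²)`. -/
theorem norm_sq_circ6_symPart (A : M6) (hA : inSp A) :
    mdot (circ6 (symPart A) (symPart A)) (circ6 (symPart A) (symPart A)) =
      4 * (mdot (symPart A) (symPart A) * mdot (symPart A) (symPart A)
        - 2 * mdot (symPart A * symPart A) (symPart A * symPart A)
        - (mdot (J6 * symPart A) (symPart A))^2) := by
  rw [symPart_eq A hA]
  exact keyId _ _ _ _ _ _ _ _ _ _ _ _
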